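/- arXiv:1203.6430 — 2 statements merged into one kernel-verified Lean document; each statement's English description precedes it below -/
import Mathlib

section
/- Let S be an automorphism of a probability space (X, μ), let n ≥ 2, and let E be a measurable set such that E, SE, …, S^{n−1}E are pairwise disjoint. Let A_1, …, A_j be measurable sets and let 0 ≤ a < ε be such that for each i there is a union B_i of some of the sets SˡE (0 ≤ l ≤ n−1) with μ(A_i Δ B_i) ≤ a. Set b = (ε − a)/(2n²). Then every automorphism V of (X, μ) satisfying |μ(Vᵐ(SⁱE) ∩ SʲE) − μ(Sᵐ(SⁱE) ∩ SʲE)| < b for all m ∈ ℤ and all 0 ≤ i, j ≤ n−1 admits a measurable set Ẽ such that Ẽ, VẼ, …, V^{n−1}Ẽ are pairwise disjoint and, for each i, some union of the sets VˡẼ (0 ≤ l ≤ n−1) differs from A_i by a set of measure less than ε. (This is the key estimate showing that the set R(j, k) of mixings possessing a Rokhlin tower approximating A_1, …, A_j with accuracy better than 1/k is open in the leash topology.) -/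
open MeasureTheory Filter Set
open scoped symmDiff

variable {X : Type*} [MeasurableSpace X]

/-- `n`-th iterate of a measurable equivalence, `n : ℕ`. -/
def mnpow (T : X ≃ᵐ X) : ℕ → X ≃ᵐ X
  | 0 => MeasurableEquiv.refl X
  | n + 1 => (mnpow T n).trans T

/-- `n`-th iterate of a measurable equivalence, `n : ℤ`; negative powers are
iterates of the inverse. -/
def mzpow (T : X ≃ᵐ X) : ℤ → X ≃ᵐ X
  | Int.ofNat n => mnpow T n
  | Int.negSucc n => mnpow T.symm (n + 1)

/-- An automorphism `T` of `(X, μ)` is mixing if `μ (Tⁿ A ∩ B) → μ A * μ B` as `n → ∞`. -/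
def Mixing (μ : Measure X) (T : X ≃ᵐ X) : Prop :=
  ∀ A B : Set X, MeasurableSet A → MeasurableSet B →
    Tendsto (fun n : ℕ => μ (mnpow T n '' A ∩ B)) atTop (nhds (μ A * μ B))

/-!
Let `F` be the set of points of `E` that do not return to `E` under `V, V², …, V^{n-1}`; the
sets `F, VF, …, V^{n-1}F` are then disjoint for free. Taking `i₁ = 0` in the leash estimate
with `b = (ε - a)/(2n²)`: since `SᵐE ∩ E = ∅` for `1 ≤ m < n`, we get `μ(VᵐE ∩ E) < b`, so
`μ(E \ F) ≤ (n - 1) b`; and `μ(VˡE ∩ SˡE) > μ E - b`, so `μ(SˡE ∆ VˡE) < 2b`. Hence every level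
`VˡF` is within `(n + 1) b` of `SˡE`, and replacing the at most `n` levels `SˡE` of `B_i` by the
`VˡF` costs less than `n(n + 1) b < 2n² b = ε - a`.
-/

lemma coe_mnpow (T : X ≃ᵐ X) : ∀ m : ℕ, ⇑(mnpow T m) = T^[m]
  | 0 => rfl
  | m + 1 => by
    rw [mnpow, MeasurableEquiv.coe_trans, coe_mnpow T m, Function.iterate_succ']

@[simp]
lemma mzpow_natCast (T : X ≃ᵐ X) (m : ℕ) : mzpow T m = mnpow T m := rfl

lemma mnpow_zero_image (T : X ≃ᵐ X) (s : Set X) : mnpow T 0 '' s = s := by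
  simp [coe_mnpow]

namespace MeasureTheory.MeasurePreserving

variable {μ : Measure X} {T : X ≃ᵐ X}

lemma mnpow (hT : MeasurePreserving T μ μ) (m : ℕ) : MeasurePreserving (mnpow T m) μ μ :=
  coe_mnpow T m ▸ hT.iterate m

lemma measureReal_mnpow_image (hT : MeasurePreserving T μ μ) (m : ℕ) (s : Set X) :
    μ.real (_root_.mnpow T m '' s) = μ.real s := by
  rw [MeasurableEquiv.image_eq_preimage_symm, measureReal_def, measureReal_def,
    ((hT.mnpow m).symm _).measure_preimage_equiv]

end MeasureTheory.MeasurePreserving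

lemma measureReal_symmDiff_lt_two_mul {μ : Measure X} [IsFiniteMeasure μ] {s t : Set X} {b : ℝ}
    (hs : MeasurableSet s) (ht : MeasurableSet t) (hst : μ.real s = μ.real t)
    (h : μ.real s - b < μ.real (s ∩ t)) : μ.real (s ∆ t) < 2 * b := by
  have hunion : μ.real (s ∆ t) + μ.real (s ∩ t) = μ.real (s ∪ t) := by
    rw [show s ∆ t = (s ∪ t) \ (s ∩ t) from symmDiff_eq_sup_sdiff_inf s t,
      measureReal_sdiff (inter_subset_left.trans subset_union_left) (hs.inter ht), sub_add_cancel]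
  have := measureReal_union_add_inter (μ := μ) (s := s) ht
  linarith

lemma measureReal_symmDiff_biUnion_le {ι : Type*} {μ : Measure X} [IsFiniteMeasure μ]
    (A : Set X) {I : Finset ι} {f g : ι → Set X} {c : ℝ} (h : ∀ l ∈ I, μ.real (f l ∆ g l) ≤ c) :
    μ.real (A ∆ ⋃ l ∈ I, g l) ≤ μ.real (A ∆ ⋃ l ∈ I, f l) + I.card * c := by
  have hsub : (⋃ l ∈ I, f l) ∆ (⋃ l ∈ I, g l) ⊆ ⋃ l ∈ I, f l ∆ g l :=
    iUnion_symmDiff_iUnion_subset.trans (iUnion_mono fun _ => iUnion_symmDiff_iUnion_subset)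
  calc μ.real (A ∆ ⋃ l ∈ I, g l)
      ≤ μ.real (A ∆ ⋃ l ∈ I, f l) + μ.real ((⋃ l ∈ I, f l) ∆ ⋃ l ∈ I, g l) :=
        measureReal_symmDiff_le _ (measure_ne_top μ _) (measure_ne_top μ _)
    _ ≤ μ.real (A ∆ ⋃ l ∈ I, f l) + ∑ l ∈ I, μ.real (f l ∆ g l) := by
        gcongr
        exact (measureReal_mono hsub (measure_ne_top μ _)).trans (measureReal_biUnion_finset_le I _)
    _ ≤ μ.real (A ∆ ⋃ l ∈ I, f l) + I.card * c := by
        gcongr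
        exact (Finset.sum_le_card_nsmul _ _ _ h).trans_eq (nsmul_eq_mul _ _)

section NonReturn

variable (V : X ≃ᵐ X) (n : ℕ) (E : Set X)

def nonReturnSet : Set X := E \ ⋃ m ∈ Finset.Ico 1 n, mnpow V m ⁻¹' E

variable {V n E}

lemma nonReturnSet_subset : nonReturnSet V n E ⊆ E := sdiff_subset

lemma MeasurableSet.nonReturnSet (hE : MeasurableSet E) : MeasurableSet (nonReturnSet V n E) :=
  hE.diff <| .biUnion (Finset.Ico 1 n).countable_toSet fun m _ => (mnpow V m).measurable hE

lemma disjoint_mnpow_image_nonReturnSet_of_lt {i₁ i₂ : ℕ} (h₁₂ : i₁ < i₂) (h₂ : i₂ < n) :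
    Disjoint (mnpow V i₁ '' nonReturnSet V n E) (mnpow V i₂ '' nonReturnSet V n E) := by
  rw [Set.disjoint_left]
  rintro _ ⟨y, hy, rfl⟩ ⟨z, hz, hzy⟩
  have hyz : y = V^[i₂ - i₁] z := by
    apply V.injective.iterate i₁
    rw [← Function.iterate_add_apply, Nat.add_sub_cancel' h₁₂.le]
    simpa only [coe_mnpow] using hzy.symm
  refine hz.2 (mem_iUnion₂.2 ⟨i₂ - i₁, Finset.mem_Ico.2 ⟨by omega, by omega⟩, ?_⟩)
  rw [mem_preimage, coe_mnpow, ← hyz]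
  exact nonReturnSet_subset hy

lemma disjoint_mnpow_image_nonReturnSet {i₁ i₂ : ℕ} (h₁ : i₁ < n) (h₂ : i₂ < n) (h : i₁ ≠ i₂) :
    Disjoint (mnpow V i₁ '' nonReturnSet V n E) (mnpow V i₂ '' nonReturnSet V n E) := by
  rcases h.lt_or_gt with h | h
  · exact disjoint_mnpow_image_nonReturnSet_of_lt h h₂
  · exact (disjoint_mnpow_image_nonReturnSet_of_lt h h₁).symm

lemma measureReal_diff_nonReturnSet_le {μ : Measure X} [IsFiniteMeasure μ]
    (hV : MeasurePreserving V μ μ) :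
    μ.real (E \ nonReturnSet V n E) ≤ ∑ m ∈ Finset.Ico 1 n, μ.real (mnpow V m '' E ∩ E) := by
  have hreturn (m : ℕ) : mnpow V m '' (E ∩ mnpow V m ⁻¹' E) = mnpow V m '' E ∩ E := by
    rw [image_inter (mnpow V m).injective, image_preimage_eq _ (mnpow V m).surjective]
  rw [nonReturnSet, sdiff_sdiff_right_self, inter_iUnion₂]
  refine (measureReal_biUnion_finset_le _ _).trans (Finset.sum_le_sum fun m _ => ?_)
  rw [← hreturn, hV.measureReal_mnpow_image]

end NonReturn

lemma measureReal_symmDiff_mnpow_image_nonReturnSet_le {μ : Measure X} [IsFiniteMeasure μ]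
    {V : X ≃ᵐ X} (hV : MeasurePreserving V μ μ) (n : ℕ) (E P : Set X) (l : ℕ) :
    μ.real (P ∆ (mnpow V l '' nonReturnSet V n E)) ≤
      μ.real (P ∆ (mnpow V l '' E)) + μ.real (E \ nonReturnSet V n E) := by
  have hlevel : (mnpow V l '' E) ∆ (mnpow V l '' nonReturnSet V n E) =
      mnpow V l '' (E \ nonReturnSet V n E) := by
    rw [← image_symmDiff (mnpow V l).injective, symmDiff_of_ge nonReturnSet_subset]
  have := measureReal_symmDiff_le (μ := μ) (s := P) (mnpow V l '' nonReturnSet V n E)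
    (t := mnpow V l '' E) (measure_ne_top μ _) (measure_ne_top μ _)
  rwa [hlevel, hV.measureReal_mnpow_image] at this

lemma measureReal_symmDiff_mnpow_image_nonReturnSet_lt {μ : Measure X} [IsFiniteMeasure μ]
    {S V : X ≃ᵐ X} (hS : MeasurePreserving S μ μ) (hV : MeasurePreserving V μ μ) {n : ℕ}
    {E : Set X} (hE : MeasurableSet E) (hdisj : ∀ m ∈ Finset.Ico 1 n, Disjoint (mnpow S m '' E) E)
    {b : ℝ} (hleash : ∀ m l, m < n → l < n →
      |μ.real (mnpow V m '' E ∩ mnpow S l '' E) - μ.real (mnpow S m '' E ∩ mnpow S l '' E)| < b)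
    {l : ℕ} (hl : l < n) :
    μ.real ((mnpow S l '' E) ∆ (mnpow V l '' nonReturnSet V n E)) < (n + 1) * b := by
  have hreturn (m : ℕ) (hm : m ∈ Finset.Ico 1 n) : μ.real (mnpow V m '' E ∩ E) ≤ b := by
    have h := hleash m 0 (Finset.mem_Ico.1 hm).2 hl.pos
    rw [mnpow_zero_image, (hdisj m hm).inter_eq, measureReal_empty, sub_zero] at h
    exact (le_abs_self _).trans h.le
  have hlevel : μ.real ((mnpow S l '' E) ∆ (mnpow V l '' E)) < 2 * b := by
    have h := hleash l l hl hl
    rw [inter_self, hS.measureReal_mnpow_image] at h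
    refine measureReal_symmDiff_lt_two_mul ((mnpow S l).measurableSet_image.2 hE)
      ((mnpow V l).measurableSet_image.2 hE) ?_ ?_
    · rw [hS.measureReal_mnpow_image, hV.measureReal_mnpow_image]
    · rw [hS.measureReal_mnpow_image, inter_comm]
      linarith [(abs_lt.1 h).1]
  have hescape : μ.real (E \ nonReturnSet V n E) ≤ (n - 1) * b := by
    refine (measureReal_diff_nonReturnSet_le hV).trans ?_
    refine (Finset.sum_le_card_nsmul _ _ b hreturn).trans_eq ?_
    rw [Nat.card_Ico, nsmul_eq_mul, Nat.cast_sub (by omega), Nat.cast_one]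
  linarith [measureReal_symmDiff_mnpow_image_nonReturnSet_le hV n E (mnpow S l '' E) l]

theorem tower_approximation_stable_general
    {X : Type*} [MeasurableSpace X]
    (μ : Measure X) [IsProbabilityMeasure μ]
    (S : X ≃ᵐ X) (hS : MeasurePreserving S μ μ)
    (n : ℕ) (hn : 2 ≤ n)
    (E : Set X) (hE : MeasurableSet E)
    (hdisj : ∀ i j, i < n → j < n → i ≠ j → Disjoint (mnpow S i '' E) (mnpow S j '' E))
    (j : ℕ) (A : Fin j → Set X)
    (a ε : ℝ) (haε : a < ε)
    (happrox : ∀ i, ∃ I : Finset ℕ, (∀ l ∈ I, l < n) ∧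
      (μ (A i ∆ ⋃ l ∈ I, mnpow S l '' E)).toReal ≤ a)
    (V : X ≃ᵐ X) (hV : MeasurePreserving V μ μ)
    (hVS : ∀ (m : ℤ) (i₁ i₂ : ℕ), i₁ < n → i₂ < n →
      |(μ (mzpow V m '' (mnpow S i₁ '' E) ∩ mnpow S i₂ '' E)).toReal -
        (μ (mzpow S m '' (mnpow S i₁ '' E) ∩ mnpow S i₂ '' E)).toReal|
        < (ε - a) / (2 * (n : ℝ) ^ 2)) :
    ∃ E' : Set X, MeasurableSet E' ∧
      (∀ i₁ i₂, i₁ < n → i₂ < n → i₁ ≠ i₂ →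
        Disjoint (mnpow V i₁ '' E') (mnpow V i₂ '' E')) ∧
      ∀ i, ∃ I : Finset ℕ, (∀ l ∈ I, l < n) ∧
        (μ (A i ∆ ⋃ l ∈ I, mnpow V l '' E')).toReal < ε := by
  set b := (ε - a) / (2 * (n : ℝ) ^ 2) with hb
  simp only [← measureReal_def] at hVS happrox ⊢
  have hleash (m l : ℕ) (hm : m < n) (hl : l < n) :
      |μ.real (mnpow V m '' E ∩ mnpow S l '' E) - μ.real (mnpow S m '' E ∩ mnpow S l '' E)| < b := by
    simpa only [mzpow_natCast, mnpow_zero_image] using hVS m 0 l (by omega) hl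
  have hdisj₀ (m : ℕ) (hm : m ∈ Finset.Ico 1 n) : Disjoint (mnpow S m '' E) E := by
    obtain ⟨hm₁, hm₂⟩ := Finset.mem_Ico.1 hm
    simpa only [mnpow_zero_image] using hdisj m 0 hm₂ (by omega) (by omega)
  refine ⟨nonReturnSet V n E, hE.nonReturnSet, fun _ _ => disjoint_mnpow_image_nonReturnSet,
    fun i => ?_⟩
  obtain ⟨I, hI, hIa⟩ := happrox i
  have hcard : (I.card : ℝ) ≤ n := by
    exact_mod_cast (Finset.card_le_card fun l hl => Finset.mem_range.2 (hI l hl)).trans_eq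
      (Finset.card_range n)
  have hn' : (2 : ℝ) ≤ n := by exact_mod_cast hn
  have hb_pos : 0 < b := div_pos (by linarith) (by positivity)
  refine ⟨I, hI, ?_⟩
  calc μ.real (A i ∆ ⋃ l ∈ I, mnpow V l '' nonReturnSet V n E)
      ≤ μ.real (A i ∆ ⋃ l ∈ I, mnpow S l '' E) + I.card * ((n + 1) * b) :=
        measureReal_symmDiff_biUnion_le _ fun l hl =>
          (measureReal_symmDiff_mnpow_image_nonReturnSet_lt hS hV hE hdisj₀ hleash (hI l hl)).le
    _ ≤ a + n * ((n + 1) * b) := by gcongr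
    _ < a + n * (2 * n * b) := by gcongr; linarith
    _ = ε := by rw [hb]; field_simp; ring

/-- Key estimate in the openness of `R(j, k)`: if `S` has a Rokhlin
tower `E, SE, …, S^{n-1}E` whose level-unions approximate `A_1, …, A_j` within `a < ε`,
and `V` is close enough (within `b = (ε - a)/(2n²)`) to `S` on the levels of the tower
in the leash sense, then `V` has a Rokhlin tower of the same height whose level-unions
approximate each `A_i` within `ε`. -/
theorem tower_approximation_stable
    {X : Type*} [MeasurableSpace X]
    (μ : Measure X) [IsProbabilityMeasure μ]
    (S : X ≃ᵐ X) (hS : MeasurePreserving S μ μ)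
    (n : ℕ) (hn : 2 ≤ n)
    (E : Set X) (hE : MeasurableSet E)
    (hdisj : ∀ i j, i < n → j < n → i ≠ j → Disjoint (mnpow S i '' E) (mnpow S j '' E))
    (j : ℕ) (A : Fin j → Set X) (hA : ∀ i, MeasurableSet (A i))
    (a ε : ℝ) (ha : 0 ≤ a) (haε : a < ε)
    (happrox : ∀ i, ∃ I : Finset ℕ, (∀ l ∈ I, l < n) ∧
      (μ (A i ∆ ⋃ l ∈ I, mnpow S l '' E)).toReal ≤ a)
    (V : X ≃ᵐ X) (hV : MeasurePreserving V μ μ)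
    (hVS : ∀ (m : ℤ) (i₁ i₂ : ℕ), i₁ < n → i₂ < n →
      |(μ (mzpow V m '' (mnpow S i₁ '' E) ∩ mnpow S i₂ '' E)).toReal -
        (μ (mzpow S m '' (mnpow S i₁ '' E) ∩ mnpow S i₂ '' E)).toReal|
        < (ε - a) / (2 * (n : ℝ) ^ 2)) :
    ∃ E' : Set X, MeasurableSet E' ∧
      (∀ i₁ i₂, i₁ < n → i₂ < n → i₁ ≠ i₂ →
        Disjoint (mnpow V i₁ '' E') (mnpow V i₂ '' E')) ∧
      ∀ i, ∃ I : Finset ℕ, (∀ l ∈ I, l < n) ∧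
        (μ (A i ∆ ⋃ l ∈ I, mnpow V l '' E')).toReal < ε :=
  tower_approximation_stable_general μ S hS n hn E hE hdisj j A a ε haε happrox V hV hVS
end

section
/- Let (Y, ν) be a standard non-atomic probability space and let S be an automorphism of (Y, ν) that is partially rigid with coefficient a > 0. Let (X, μ) be a standard non-atomic probability space and T a mixing automorphism of (X, μ). Then there exist a measurable set A ⊆ X and ε > 0 such that for every invertible measure-preserving map Q : X → Y (with Q_*μ = ν), the conjugate V = Q⁻¹ ∘ S ∘ Q satisfies |μ(Vⁿ A ∩ A) − μ(Tⁿ A ∩ A)| ≥ ε for some n ∈ ℤ. (In other words, the conjugacy class of a partially rigid transformation cannot approximate mixing transformations in the leash topology.) -/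
open MeasureTheory Filter Set
open scoped symmDiff

variable {X : Type*} [MeasurableSpace X]

/-- An automorphism `S` of `(Y, ν)` is partially rigid with coefficient `a > 0` if
`limsup_{i → ∞} ν (A ∩ Sⁱ A) ≥ a · ν A` for every measurable set `A`. -/
def PartiallyRigid {Y : Type*} [MeasurableSpace Y] (ν : Measure Y) (S : Y ≃ᵐ Y)
    (a : ℝ) : Prop :=
  ∀ A : Set Y, MeasurableSet A →
    a * (ν A).toReal ≤ limsup (fun i : ℕ => (ν (A ∩ mnpow S i '' A)).toReal) atTop

/-! Pick `A` with `μ A = m` for some `0 < m < a`, possible because `μ` has no atoms.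
Partial rigidity passes to every conjugate `V = Q⁻¹ S Q`, so `μ (Vⁿ A ∩ A)` has limsup at
least `a m`, whereas mixing forces `μ (Tⁿ A ∩ A) → m²`. Since `m² < a m`, the two sequences
differ by `(a m - m²) / 2` at some time, whatever `Q` is. -/

open ProbabilityTheory
open scoped Topology

section

variable {Y : Type*} [MeasurableSpace Y]

theorem continuous_cdf (ρ : Measure ℝ) [IsProbabilityMeasure ρ] [NullSingletonClass ρ] :
    Continuous (cdf ρ) := by
  refine continuous_iff_continuousAt.2 fun x => ?_
  have hleft : Function.leftLim (cdf ρ) x = cdf ρ x := by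
    have h := (cdf ρ).measure_singleton x
    rw [measure_cdf, measure_singleton, eq_comm, ENNReal.ofReal_eq_zero] at h
    exact le_antisymm ((monotone_cdf ρ).leftLim_le le_rfl) (sub_nonpos.1 h)
  rw [(monotone_cdf ρ).continuousAt_iff_leftLim_eq_rightLim, hleft, (cdf ρ).rightLim_eq]

theorem exists_measureReal_Iic_eq (ρ : Measure ℝ) [IsProbabilityMeasure ρ] [NullSingletonClass ρ]
    {c : ℝ} (hc : c ∈ Ioo 0 1) : ∃ t, ρ.real (Iic t) = c := by
  obtain ⟨t₀, ht₀⟩ := ((tendsto_cdf_atBot ρ).eventually_le_const hc.1).exists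
  obtain ⟨t₁, ht₁⟩ := ((tendsto_cdf_atTop ρ).eventually_const_le hc.2).exists
  obtain ⟨t, ht⟩ := intermediate_value_univ t₀ t₁ (continuous_cdf ρ) ⟨ht₀, ht₁⟩
  exact ⟨t, by rw [← cdf_eq_real, ht]⟩

theorem MeasurableEmbedding.nullSingletonClass_map {f : X → Y}
    (hf : MeasurableEmbedding f) (μ : Measure X) [NullSingletonClass μ] :
    NullSingletonClass (μ.map f) where
  measure_singleton y := by
    rw [hf.map_apply]
    have hsub : (f ⁻¹' {y}).Subsingleton := fun _ hx _ hx' => hf.injective (hx.trans hx'.symm)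
    exact hsub.measure_zero μ

theorem exists_measurableSet_measureReal_eq [StandardBorelSpace X] (μ : Measure X)
    [IsProbabilityMeasure μ] [NullSingletonClass μ] {c : ℝ} (hc : c ∈ Ioo 0 1) :
    ∃ A : Set X, MeasurableSet A ∧ μ.real A = c := by
  obtain ⟨f, hf⟩ := exists_measurableEmbedding_real X
  have := Measure.isProbabilityMeasure_map (μ := μ) hf.measurable.aemeasurable
  have := hf.nullSingletonClass_map μ
  obtain ⟨t, ht⟩ := exists_measureReal_Iic_eq (μ.map f) hc
  exact ⟨f ⁻¹' Iic t, hf.measurable measurableSet_Iic,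
    by rwa [← map_measureReal_apply hf.measurable measurableSet_Iic]⟩

theorem mnpow_conj (Q : X ≃ᵐ Y) (S : Y ≃ᵐ Y) (n : ℕ) :
    mnpow ((Q.trans S).trans Q.symm) n = (Q.trans (mnpow S n)).trans Q.symm := by
  induction n with
  | zero => ext x; simp [mnpow]
  | succ n ih => ext x; simp [mnpow, ih]

theorem PartiallyRigid.conj {ν : Measure Y} {S : Y ≃ᵐ Y} {a : ℝ}
    (hS : PartiallyRigid ν S a) {μ : Measure X} {Q : X ≃ᵐ Y} (hQ : MeasurePreserving Q μ ν) :
    PartiallyRigid μ ((Q.trans S).trans Q.symm) a := by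
  intro A hA
  have hQA : Q ⁻¹' (Q '' A) = A := Q.preimage_image A
  have hconj (n : ℕ) : A ∩ mnpow ((Q.trans S).trans Q.symm) n '' A
      = Q ⁻¹' (Q '' A ∩ mnpow S n '' (Q '' A)) := by
    rw [mnpow_conj, preimage_inter, hQA, MeasurableEquiv.coe_trans, MeasurableEquiv.coe_trans,
      image_comp, image_comp, Q.image_symm]
  have hμA : μ A = ν (Q '' A) := by rw [← hQ.measure_preimage_equiv, hQA]
  simpa only [hconj, hQ.measure_preimage_equiv, hμA] using hS (Q '' A) (Q.measurableSet_image.2 hA)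

theorem exists_le_abs_sub_of_tendsto_of_le_limsup {ι : Type*} {l : Filter ι} {v t : ι → ℝ}
    {L b ε : ℝ} (hv : IsCoboundedUnder (· ≤ ·) l v) (ht : Tendsto t l (𝓝 L))
    (hb : b ≤ limsup v l) (hε : ε < b - L) : ∃ i, ε ≤ |v i - t i| := by
  by_contra! hclose
  have hev : ∀ᶠ i in l, v i ≤ (b + L + ε) / 2 := by
    filter_upwards [ht.eventually_lt_const (show L < (b + L - ε) / 2 by linarith)] with i hi
    linarith [(abs_lt.1 (hclose i)).2]
  linarith [limsup_le_of_le hv hev]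

theorem Mixing.tendsto_measureReal {μ : Measure X} [IsFiniteMeasure μ] {T : X ≃ᵐ X}
    (hT : Mixing μ T) {A B : Set X} (hA : MeasurableSet A) (hB : MeasurableSet B) :
    Tendsto (fun n => μ.real (mnpow T n '' A ∩ B)) atTop (𝓝 (μ.real A * μ.real B)) := by
  simpa only [measureReal_def, ENNReal.toReal_mul, Function.comp_def] using
    (ENNReal.tendsto_toReal (by finiteness)).comp (hT A B hA hB)

end

theorem partially_rigid_conjugates_not_dense_general
    {X Y : Type*} [MeasurableSpace X] [StandardBorelSpace X]
    [MeasurableSpace Y]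
    (μ : Measure X) (ν : Measure Y)
    [IsProbabilityMeasure μ] [NullSingletonClass μ]
    (S : Y ≃ᵐ Y)
    (a : ℝ) (ha : 0 < a) (hSpr : PartiallyRigid ν S a)
    (T : X ≃ᵐ X) (hTmix : Mixing μ T) :
    ∃ A : Set X, MeasurableSet A ∧ ∃ ε : ℝ, 0 < ε ∧
      ∀ Q : X ≃ᵐ Y, MeasurePreserving Q μ ν →
        ∃ n : ℤ,
          ε ≤ |(μ (mzpow ((Q.trans S).trans Q.symm) n '' A ∩ A)).toReal -
                (μ (mzpow T n '' A ∩ A)).toReal| := by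
  obtain ⟨m, hm, hma⟩ : ∃ m ∈ Ioo (0 : ℝ) 1, m < a :=
    ⟨min a 1 / 2, ⟨half_pos (lt_min ha one_pos), by linarith [min_le_right a 1]⟩,
      by linarith [min_le_left a 1]⟩
  obtain ⟨A, hA, hμA⟩ := exists_measurableSet_measureReal_eq μ hm
  refine ⟨A, hA, (a * m - m * m) / 2, by nlinarith [hm.1], fun Q hQ => ?_⟩
  have hmix := hTmix.tendsto_measureReal hA hA
  have hrig := hSpr.conj hQ A hA
  simp only [← measureReal_def, inter_comm A] at hrig
  rw [hμA] at hmix hrig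
  obtain ⟨n, hn⟩ := exists_le_abs_sub_of_tendsto_of_le_limsup (ε := (a * m - m * m) / 2)
    (isCoboundedUnder_le_of_le atTop fun _ => measureReal_nonneg) hmix hrig
    (by nlinarith [hm.1])
  exact ⟨n, hn⟩

/-- The conjugacy class of a partially rigid transformation cannot
approximate a mixing transformation in the leash topology. -/
theorem partially_rigid_conjugates_not_dense
    {X Y : Type*} [MeasurableSpace X] [StandardBorelSpace X]
    [MeasurableSpace Y] [StandardBorelSpace Y]
    (μ : Measure X) (ν : Measure Y)
    [IsProbabilityMeasure μ] [IsProbabilityMeasure ν] [NullSingletonClass μ] [NullSingletonClass ν]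
    (S : Y ≃ᵐ Y) (hS : MeasurePreserving S ν ν)
    (a : ℝ) (ha : 0 < a) (hSpr : PartiallyRigid ν S a)
    (T : X ≃ᵐ X) (hT : MeasurePreserving T μ μ) (hTmix : Mixing μ T) :
    ∃ A : Set X, MeasurableSet A ∧ ∃ ε : ℝ, 0 < ε ∧
      ∀ Q : X ≃ᵐ Y, MeasurePreserving Q μ ν →
        ∃ n : ℤ,
          ε ≤ |(μ (mzpow ((Q.trans S).trans Q.symm) n '' A ∩ A)).toReal -
                (μ (mzpow T n '' A ∩ A)).toReal| :=
  partially_rigid_conjugates_not_dense_general μ ν S a ha hSpr T hTmix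
end
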